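/- Let u ∈ L¹_loc(ℝ²;ℝⁿ), Λ > 0, and suppose every point of a set J ⊂ ℝ² is an approximate jump point of u with jump states bounded by M and with shock speed bounded in absolute value by Λ/2 (i.e. for each (τ,ξ) ∈ J there are u⁻ ≠ u⁺ ∈ B_M and |λ| ≤ Λ/2 such that the blow-up of u at (τ,ξ) converges in the averaged L¹ sense to the single-jump profile with these data). Then J can be covered by countably many graphs of Lipschitz functions x = φ_ℓ(t), ℓ ∈ ℕ, each with Lipschitz constant at most Λ. -/

import Mathlib

/-!
If a jump point `q'` lies strictly above the cone of slope `Λ` at another jump point `q`, then a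
ball around `q'` of radius comparable to `q'.2 - q.2` lies entirely on the `u⁺` side of the
profile at `q` (its speed is at most `Λ / 2`), while it contains both sides of the profile at
`q'`. Comparing both profiles with `u` on that ball bounds the jump at `q'` by a constant
depending on `Λ` times the blow-up errors at `q` and `q'`. So among the points with jump at
least `1/k` whose blow-up error stays below `ε(k, Λ)` at all scales below `1/j`, any two at
distance `< 1/(4j)` satisfy the cone condition of slope `Λ`. Cutting this set into countably
many pieces of small diameter, each piece is the graph of a `Λ`-Lipschitz function on its
projection, which extends to the whole line (McShane).
-/

open MeasureTheory Set Filter Topology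

/-- The open disk in the (t,x)-plane with center `c` and radius `ρ`. -/
def disk (c : ℝ × ℝ) (ρ : ℝ) : Set (ℝ × ℝ) :=
  {p | (p.1 - c.1)^2 + (p.2 - c.2)^2 < ρ^2}

open Metric

lemma abs_sub_lt_of_mem_ball {p c : ℝ × ℝ} {r : ℝ} (hp : p ∈ ball c r) :
    |p.1 - c.1| < r ∧ |p.2 - c.2| < r := by
  rwa [mem_ball, Prod.dist_eq, max_lt_iff, Real.dist_eq, Real.dist_eq] at hp

lemma disk_subset_ball (c : ℝ × ℝ) {ρ : ℝ} (hρ : 0 ≤ ρ) : disk c ρ ⊆ ball c ρ := by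
  intro p hp
  have hp : (p.1 - c.1)^2 + (p.2 - c.2)^2 < ρ^2 := hp
  rw [mem_ball, Prod.dist_eq, max_lt_iff, Real.dist_eq, Real.dist_eq]
  constructor <;> apply abs_lt_of_sq_lt_sq _ hρ <;>
    nlinarith [sq_nonneg (p.1 - c.1), sq_nonneg (p.2 - c.2)]

lemma ball_half_subset_disk (c : ℝ × ℝ) (ρ : ℝ) : ball c (ρ / 2) ⊆ disk c ρ := by
  intro p hp
  obtain ⟨h1, h2⟩ := abs_sub_lt_of_mem_ball hp
  have h1 := sq_lt_sq' (abs_lt.1 h1).1 (abs_lt.1 h1).2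
  have h2 := sq_lt_sq' (abs_lt.1 h2).1 (abs_lt.1 h2).2
  show (p.1 - c.1)^2 + (p.2 - c.2)^2 < ρ^2
  nlinarith

def ConeCondition (Λ : ℝ) (S : Set (ℝ × ℝ)) : Prop :=
  ∀ p ∈ S, ∀ p' ∈ S, |p'.2 - p.2| ≤ Λ * |p'.1 - p.1|

lemma ConeCondition.exists_lipschitzWith {Λ : ℝ} {S : Set (ℝ × ℝ)} (hS : ConeCondition Λ S) :
    ∃ φ : ℝ → ℝ, LipschitzWith Λ.toNNReal φ ∧ ∀ p ∈ S, p.2 = φ p.1 := by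
  set f : ℝ → ℝ := fun t => (Function.invFunOn Prod.fst S t).2
  have hf : ∀ p ∈ S, f p.1 = p.2 := by
    intro p hp
    have hex : ∃ a ∈ S, a.1 = p.1 := ⟨p, hp, rfl⟩
    have := hS p hp _ (Function.invFunOn_mem hex)
    rwa [Function.invFunOn_eq hex, sub_self, abs_zero, mul_zero, abs_nonpos_iff,
      sub_eq_zero] at this
  have hlip : LipschitzOnWith Λ.toNNReal f (Prod.fst '' S) := by
    refine LipschitzOnWith.of_dist_le_mul ?_
    rintro _ ⟨p, hp, rfl⟩ _ ⟨p', hp', rfl⟩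
    rw [Real.dist_eq, Real.dist_eq, hf p hp, hf p' hp']
    exact (hS p' hp' p hp).trans
      (mul_le_mul_of_nonneg_right (Real.le_coe_toNNReal Λ) (abs_nonneg _))
  obtain ⟨φ, hφ, hfφ⟩ := hlip.extend_real
  exact ⟨φ, hφ, fun p hp => (hf p hp).symm.trans (hfφ ⟨p, hp, rfl⟩)⟩

lemma exists_lipschitzWith_cover {ι : Type*} [Countable ι] [Nonempty ι] {Λ : ℝ}
    {S : ι → Set (ℝ × ℝ)} (hS : ∀ i, ConeCondition Λ (S i)) {J : Set (ℝ × ℝ)}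
    (hJ : J ⊆ ⋃ i, S i) :
    ∃ φ : ℕ → ℝ → ℝ, (∀ ℓ, LipschitzWith Λ.toNNReal (φ ℓ)) ∧
      J ⊆ ⋃ ℓ, {p : ℝ × ℝ | p.2 = φ ℓ p.1} := by
  choose ψ hψ hSψ using fun i => (hS i).exists_lipschitzWith
  obtain ⟨e, he⟩ := exists_surjective_nat ι
  refine ⟨ψ ∘ e, fun ℓ => hψ (e ℓ), fun q hq => ?_⟩
  obtain ⟨i, hi⟩ := mem_iUnion.1 (hJ hq)
  obtain ⟨ℓ, rfl⟩ := he i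
  exact mem_iUnion.2 ⟨ℓ, hSψ _ q hi⟩

section

variable {E : Type*}

noncomputable def jumpProfile (q : ℝ × ℝ) (l : ℝ) (um up : E) (p : ℝ × ℝ) : E :=
  if p.2 - q.2 < l * (p.1 - q.1) then um else up

lemma jumpProfile_eq_right_of_mem_ball {q q' p : ℝ × ℝ} {l Λ ρ : ℝ} (um up : E)
    (hl : |l| ≤ Λ / 2) (hcone : Λ * |q'.1 - q.1| ≤ q'.2 - q.2)
    (hρ : (2 + Λ) * ρ ≤ q'.2 - q.2) (hp : p ∈ ball q' ρ) :
    jumpProfile q l um up p = up := by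
  obtain ⟨h1, h2⟩ := abs_sub_lt_of_mem_ball hp
  have hlp : l * (p.1 - q.1) ≤ Λ / 2 * (ρ + |q'.1 - q.1|) := by
    calc l * (p.1 - q.1) ≤ |l| * |p.1 - q.1| := by rw [← abs_mul]; exact le_abs_self _
      _ ≤ Λ / 2 * (ρ + |q'.1 - q.1|) := by
        gcongr
        · exact (abs_nonneg l).trans hl
        · linarith [abs_sub_le p.1 q'.1 q.1]
  unfold jumpProfile
  rw [if_neg]
  linarith [(abs_lt.1 h2).1]

variable [NormedAddCommGroup E]

lemma locallyIntegrable_jumpProfile (q : ℝ × ℝ) (l : ℝ) (um up : E) :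
    LocallyIntegrable (jumpProfile q l um up) volume := by
  have hS : MeasurableSet {p : ℝ × ℝ | p.2 - q.2 < l * (p.1 - q.1)} :=
    measurableSet_lt (by fun_prop) (by fun_prop)
  have h : jumpProfile q l um up = {p | p.2 - q.2 < l * (p.1 - q.1)}.indicator (fun _ => um) +
      {p | p.2 - q.2 < l * (p.1 - q.1)}ᶜ.indicator (fun _ => up) := by
    funext p
    by_cases hp : p.2 - q.2 < l * (p.1 - q.1) <;> simp [jumpProfile, hp]
  rw [h]
  exact ((locallyIntegrable_const um).indicator hS).add
    ((locallyIntegrable_const up).indicator hS.compl)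

lemma MeasureTheory.LocallyIntegrable.integrableOn_disk {f : ℝ × ℝ → E}
    (hf : LocallyIntegrable f volume) (c : ℝ × ℝ) {ρ : ℝ} (hρ : 0 ≤ ρ) :
    IntegrableOn f (disk c ρ) :=
  (hf.integrableOn_isCompact (isCompact_closedBall c ρ)).mono_set
    ((disk_subset_ball c hρ).trans ball_subset_closedBall)

lemma setIntegral_norm_le_of_subset_disk {f : ℝ × ℝ → E} (hf : LocallyIntegrable f volume)
    {s : Set (ℝ × ℝ)} {c : ℝ × ℝ} {r ε : ℝ} (hr : 0 < r) (hs : s ⊆ disk c r)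
    (hest : (r^2)⁻¹ * ∫ p in disk c r, ‖f p‖ ≤ ε) :
    ∫ p in s, ‖f p‖ ≤ ε * r^2 := by
  rw [inv_mul_le_iff₀ (by positivity), mul_comm] at hest
  refine le_trans (setIntegral_mono_set ?_ ?_ hs.eventuallyLE) hest
  · exact (hf.integrableOn_disk c hr.le).norm
  · exact Eventually.of_forall fun p => norm_nonneg _

/-- Inside `ball q ρ` the profile equals `um` on a rectangle below `q` and `up` on one above it,
each of area `ρ² / (1 + Λ)`. -/
lemma mul_norm_sub_le_setIntegral_jumpProfile {q : ℝ × ℝ} {l Λ ρ : ℝ} (um up v : E)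
    (hl : |l| ≤ Λ / 2) (hρ : 0 < ρ) :
    ρ^2 / (1 + Λ) * ‖um - up‖ ≤ ∫ p in ball q ρ, ‖jumpProfile q l um up p - v‖ := by
  have hΛ : 0 ≤ Λ := by linarith [abs_nonneg l]
  set w := ρ / (1 + Λ) with hw
  have hw0 : 0 < w := by positivity
  have hwρ : w ≤ ρ := div_le_self hρ.le (by linarith)
  have hlw : ∀ t ∈ ball q.1 w, |l * (t - q.1)| ≤ ρ / 2 := by
    intro t ht
    rw [abs_mul]
    calc |l| * |t - q.1| ≤ Λ / 2 * w := by
          gcongr; exact (mem_ball_iff_norm.1 ht).le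
      _ ≤ ρ / 2 := by
        rw [hw, mul_div_assoc', div_le_div_iff₀ (by positivity) two_pos]
        nlinarith
  set Rm := ball q.1 w ×ˢ Ioo (q.2 - ρ) (q.2 - ρ / 2)
  set Rp := ball q.1 w ×ˢ Ioo (q.2 + ρ / 2) (q.2 + ρ)
  have hsub : Rm ∪ Rp ⊆ ball q ρ := by
    rw [← ball_prod_same, Real.ball_eq_Ioo q.2]
    refine union_subset (prod_mono (ball_subset_ball hwρ) ?_)
      (prod_mono (ball_subset_ball hwρ) ?_) <;> exact Ioo_subset_Ioo (by linarith) (by linarith)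
  have hvol : ∀ a, volume.real (ball q.1 w ×ˢ Ioo a (a + ρ / 2)) = ρ^2 / (1 + Λ) := by
    intro a
    rw [Measure.volume_eq_prod, measureReal_prod_prod, Real.volume_real_ball hw0.le,
      Real.volume_real_Ioo, add_sub_cancel_left, max_eq_left (by positivity), hw]
    field_simp
  have hf : IntegrableOn (fun p => ‖jumpProfile q l um up p - v‖) (ball q ρ) :=
    IntegrableOn.mono_set (((locallyIntegrable_jumpProfile q l um up).sub
      (locallyIntegrable_const v)).integrableOn_isCompact (isCompact_closedBall q ρ)).norm
      ball_subset_closedBall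
  have hRm : ∫ p in Rm, ‖jumpProfile q l um up p - v‖ = ρ^2 / (1 + Λ) * ‖um - v‖ := by
    rw [setIntegral_congr_fun (g := fun _ => ‖um - v‖)
      (measurableSet_ball.prod measurableSet_Ioo), setIntegral_const, smul_eq_mul, ← hvol (q.2 - ρ)]
    · ring_nf
    rintro p ⟨ht, -, hx⟩
    have := hlw p.1 ht
    dsimp only
    rw [jumpProfile, if_pos (by linarith [neg_abs_le (l * (p.1 - q.1))])]
  have hRp : ∫ p in Rp, ‖jumpProfile q l um up p - v‖ = ρ^2 / (1 + Λ) * ‖up - v‖ := by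
    rw [setIntegral_congr_fun (g := fun _ => ‖up - v‖)
      (measurableSet_ball.prod measurableSet_Ioo), setIntegral_const, smul_eq_mul,
      ← hvol (q.2 + ρ / 2)]
    · ring_nf
    rintro p ⟨ht, hx, -⟩
    have := hlw p.1 ht
    dsimp only
    rw [jumpProfile, if_neg (by linarith [le_abs_self (l * (p.1 - q.1))])]
  have hdisj : Disjoint Rm Rp :=
    disjoint_prod.2 (Or.inr (disjoint_left.2 fun x h1 h2 => by linarith [h1.2, h2.1]))
  calc ρ^2 / (1 + Λ) * ‖um - up‖ ≤ ρ^2 / (1 + Λ) * (‖um - v‖ + ‖up - v‖) := by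
        gcongr
        exact norm_sub_le_norm_sub_add_norm_sub um v up |>.trans (by rw [norm_sub_rev v])
    _ = ∫ p in Rm ∪ Rp, ‖jumpProfile q l um up p - v‖ := by
        rw [setIntegral_union hdisj (measurableSet_ball.prod measurableSet_Ioo)
          (hf.mono_set (subset_union_left.trans hsub))
          (hf.mono_set (subset_union_right.trans hsub)), hRm, hRp, mul_add]
    _ ≤ ∫ p in ball q ρ, ‖jumpProfile q l um up p - v‖ :=
        setIntegral_mono_set hf (Eventually.of_forall fun p => norm_nonneg _) hsub.eventuallyLE

/-- The set `J_{k,j}` of the paper, with jump threshold `κ = 1/k` and scale `η = 1/j`. -/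
def jumpPoints (u : ℝ × ℝ → E) (Λ κ ε η : ℝ) : Set (ℝ × ℝ) :=
  {q | ∃ (um up : E) (l : ℝ), κ ≤ ‖um - up‖ ∧ |l| ≤ Λ / 2 ∧
    ∀ r ∈ Ioo 0 η, (r^2)⁻¹ * ∫ p in disk q r, ‖u p - jumpProfile q l um up p‖ ≤ ε}

/-- With `d = dist q q'` and `ρ = (q'.2 - q.2) / (2 + Λ)`, the jump at `q'` contributes
`κ ρ² / (1 + Λ)` on `ball q' ρ`, comparing the two profiles there costs
`ε (2ρ)² + ε (2(ρ + d))² ≤ 20 ε d²`, and `Λ d ≤ (2 + Λ)(1 + Λ) ρ`. -/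
noncomputable def coneConst (Λ : ℝ) : ℝ := 20 * (1 + Λ)^3 * (2 + Λ)^2 / Λ^2

lemma le_coneConst_mul {Λ κ ε ρ d : ℝ} (hΛ : 0 < Λ) (hρ : 0 < ρ) (hε : 0 ≤ ε) (hρd : ρ ≤ d)
    (hΛd : Λ * d ≤ (2 + Λ) * (1 + Λ) * ρ)
    (h : ρ^2 / (1 + Λ) * κ ≤ ε * (2 * ρ)^2 + ε * (2 * (ρ + d))^2) :
    κ ≤ coneConst Λ * ε := by
  have hsum : ε * (2 * ρ)^2 + ε * (2 * (ρ + d))^2 ≤ 20 * ε * d^2 := by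
    have : (2 * ρ)^2 + (2 * (ρ + d))^2 ≤ 20 * d^2 := by nlinarith
    nlinarith
  have hd2 : (Λ * d)^2 ≤ ((2 + Λ) * (1 + Λ) * ρ)^2 :=
    pow_le_pow_left₀ (by nlinarith) hΛd 2
  rw [div_mul_eq_mul_div, div_le_iff₀ (by positivity)] at h
  rw [coneConst, div_mul_eq_mul_div, le_div_iff₀ (by positivity)]
  refine le_of_mul_le_mul_right ?_ (pow_pos hρ 2)
  calc κ * Λ^2 * ρ^2 = Λ^2 * (ρ^2 * κ) := by ring
    _ ≤ Λ^2 * ((20 * ε * d^2) * (1 + Λ)) := by gcongr Λ^2 * ?_; exact h.trans (by gcongr)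
    _ = 20 * ε * (1 + Λ) * (Λ * d)^2 := by ring
    _ ≤ 20 * ε * (1 + Λ) * ((2 + Λ) * (1 + Λ) * ρ)^2 := by gcongr
    _ = 20 * (1 + Λ)^3 * (2 + Λ)^2 * ε * ρ^2 := by ring

lemma le_coneConst_mul_of_mem_jumpPoints {u : ℝ × ℝ → E} (hu : LocallyIntegrable u volume)
    {Λ κ ε η : ℝ} (hΛ : 0 < Λ) {q q' : ℝ × ℝ} (hq : q ∈ jumpPoints u Λ κ ε η)
    (hq' : q' ∈ jumpPoints u Λ κ ε η) (hd : dist q q' < η / 4)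
    (hcone : Λ * |q'.1 - q.1| < q'.2 - q.2) : κ ≤ coneConst Λ * ε := by
  obtain ⟨um, up, l, -, hl, hest⟩ := hq
  obtain ⟨um', up', l', hκ, hl', hest'⟩ := hq'
  set d := dist q q' with hd_def
  set ρ := (q'.2 - q.2) / (2 + Λ) with hρ_def
  have hΔ : 0 < q'.2 - q.2 := lt_of_le_of_lt (by positivity) hcone
  have hρ : 0 < ρ := by positivity
  have hρΔ : (2 + Λ) * ρ = q'.2 - q.2 := by rw [hρ_def]; field_simp
  have hdist : |q'.1 - q.1| ≤ d ∧ q'.2 - q.2 ≤ d := by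
    rw [hd_def, dist_comm, Prod.dist_eq, Real.dist_eq, Real.dist_eq]
    exact ⟨le_max_left _ _, (le_abs_self _).trans (le_max_right _ _)⟩
  have hρd : ρ ≤ d := by nlinarith
  have hΛd : Λ * d ≤ (2 + Λ) * (1 + Λ) * ρ := by
    rw [hd_def, dist_comm, Prod.dist_eq, Real.dist_eq, Real.dist_eq, abs_of_pos hΔ,
      mul_max_of_nonneg _ _ hΛ.le]
    refine max_le ?_ ?_ <;> nlinarith
  have hU :
      EqOn (fun p => ‖u p - up‖) (fun p => ‖u p - jumpProfile q l um up p‖) (ball q' ρ) :=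
    fun p hp => by dsimp only; rw [jumpProfile_eq_right_of_mem_ball um up hl hcone.le hρΔ.le hp]
  have hfar : ∫ p in ball q' ρ, ‖u p - up‖ ≤ ε * (2 * (ρ + d))^2 := by
    rw [setIntegral_congr_fun measurableSet_ball hU]
    refine setIntegral_norm_le_of_subset_disk (hu.sub (locallyIntegrable_jumpProfile q l um up))
      (by positivity) ?_ (hest _ ⟨by positivity, by linarith⟩)
    refine (ball_subset_ball' ?_).trans (ball_half_subset_disk q _)
    rw [dist_comm]; linarith
  have hnear : ∫ p in ball q' ρ, ‖u p - jumpProfile q' l' um' up' p‖ ≤ ε * (2 * ρ)^2 := by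
    refine setIntegral_norm_le_of_subset_disk
      (hu.sub (locallyIntegrable_jumpProfile q' l' um' up')) (by positivity) ?_
      (hest' _ ⟨by positivity, by linarith⟩)
    simpa using ball_half_subset_disk q' (2 * ρ)
  have hε : 0 ≤ ε := by
    have := (setIntegral_nonneg measurableSet_ball fun p _ => norm_nonneg _).trans hnear
    exact nonneg_of_mul_nonneg_left this (by positivity)
  have hint : ∀ {f : ℝ × ℝ → E}, LocallyIntegrable f volume →
      IntegrableOn (fun p => ‖f p‖) (ball q' ρ) := fun hf =>
    IntegrableOn.mono_set (hf.integrableOn_isCompact (isCompact_closedBall q' ρ)).norm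
      ball_subset_closedBall
  refine le_coneConst_mul hΛ hρ hε hρd hΛd ?_
  calc ρ^2 / (1 + Λ) * κ ≤ ρ^2 / (1 + Λ) * ‖um' - up'‖ := by gcongr
    _ ≤ ∫ p in ball q' ρ, ‖jumpProfile q' l' um' up' p - up‖ :=
        mul_norm_sub_le_setIntegral_jumpProfile um' up' up hl' hρ
    _ ≤ ∫ p in ball q' ρ, (‖u p - jumpProfile q' l' um' up' p‖ + ‖u p - up‖) := by
        refine setIntegral_mono_on
          (hint ((locallyIntegrable_jumpProfile _ _ _ _).sub (locallyIntegrable_const up)))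
          ((hint (hu.sub (locallyIntegrable_jumpProfile _ _ _ _))).add
            (hint (hu.sub (locallyIntegrable_const up)))) measurableSet_ball fun p _ => ?_
        rw [norm_sub_rev (u p)]
        exact norm_sub_le_norm_sub_add_norm_sub _ _ _
    _ = (∫ p in ball q' ρ, ‖u p - jumpProfile q' l' um' up' p‖) +
          ∫ p in ball q' ρ, ‖u p - up‖ :=
        integral_add (hint (hu.sub (locallyIntegrable_jumpProfile _ _ _ _)))
          (hint (hu.sub (locallyIntegrable_const up)))
    _ ≤ ε * (2 * ρ)^2 + ε * (2 * (ρ + d))^2 := add_le_add hnear hfar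

lemma coneCondition_jumpPoints_inter_ball {u : ℝ × ℝ → E} (hu : LocallyIntegrable u volume)
    {Λ κ ε η : ℝ} (hΛ : 0 < Λ) (hε : coneConst Λ * ε < κ) (c : ℝ × ℝ) :
    ConeCondition Λ (jumpPoints u Λ κ ε η ∩ ball c (η / 8)) := by
  have key : ∀ q ∈ jumpPoints u Λ κ ε η ∩ ball c (η / 8),
      ∀ q' ∈ jumpPoints u Λ κ ε η ∩ ball c (η / 8), q'.2 - q.2 ≤ Λ * |q'.1 - q.1| := by
    rintro q ⟨hq, hqc⟩ q' ⟨hq', hq'c⟩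
    by_contra! hcone
    have hd : dist q q' < η / 4 := by
      linarith [dist_triangle_right q q' c, mem_ball.1 hqc, mem_ball.1 hq'c]
    exact (le_coneConst_mul_of_mem_jumpPoints hu hΛ hq hq' hd hcone).not_gt hε
  intro q hq q' hq'
  refine abs_le.2 ⟨?_, key q hq q' hq'⟩
  have := key q' hq' q hq
  rw [abs_sub_comm] at this
  linarith

lemma exists_nat_mem_jumpPoints {u : ℝ × ℝ → E} {Λ κ ε l : ℝ} {q : ℝ × ℝ} {um up : E}
    (hκ : κ ≤ ‖um - up‖) (hl : |l| ≤ Λ / 2) (hε : 0 < ε)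
    (hT : Tendsto (fun r : ℝ => (r^2)⁻¹ * ∫ p in disk q r, ‖u p - jumpProfile q l um up p‖)
      (𝓝[>] 0) (𝓝 0)) :
    ∃ j : ℕ, q ∈ jumpPoints u Λ κ ε (1 / (j + 1)) := by
  obtain ⟨η, hη : 0 < η, hsub⟩ :=
    mem_nhdsGT_iff_exists_Ioo_subset.1 (hT.eventually_le_const hε)
  obtain ⟨j, hj⟩ := exists_nat_one_div_lt hη
  exact ⟨j, um, up, l, hκ, hl, fun r hr => hsub ⟨hr.1, hr.2.trans hj⟩⟩

end

theorem stmt17_general (n : ℕ) (Λ M : ℝ) (hΛ : 0 < Λ)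
    (u : ℝ × ℝ → EuclideanSpace ℝ (Fin n)) (hu : LocallyIntegrable u volume)
    (J : Set (ℝ × ℝ))
    (hJ : ∀ q ∈ J, ∃ (um up : EuclideanSpace ℝ (Fin n)) (l : ℝ),
      um ≠ up ∧ ‖um‖ ≤ M ∧ ‖up‖ ≤ M ∧ |l| ≤ Λ/2 ∧
      Tendsto (fun r : ℝ => (r^2)⁻¹ *
          ∫ p in disk q r, ‖u p - (if p.2 - q.2 < l * (p.1 - q.1) then um else up)‖)
        (𝓝[>] 0) (𝓝 0)) :
    ∃ φ : ℕ → ℝ → ℝ, (∀ ℓ, LipschitzWith Λ.toNNReal (φ ℓ)) ∧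
      J ⊆ ⋃ ℓ, {p : ℝ × ℝ | p.2 = φ ℓ p.1} := by
  have hC : 0 < coneConst Λ := by unfold coneConst; positivity
  set ε : ℕ → ℝ := fun k => 1 / (k + 1) / (2 * coneConst Λ)
  have hε : ∀ k, coneConst Λ * ε k < 1 / (k + 1) := fun k => by
    have : coneConst Λ * ε k = 1 / (k + 1) / 2 := by simp only [ε]; field_simp
    rw [this]
    exact half_lt_self (by positivity)
  refine exists_lipschitzWith_cover (S := fun i : ℕ × ℕ × ℕ =>
      jumpPoints u Λ (1 / (i.1 + 1)) (ε i.1) (1 / (i.2.1 + 1)) ∩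
        ball (TopologicalSpace.denseSeq (ℝ × ℝ) i.2.2) (1 / (i.2.1 + 1) / 8))
    (fun i => coneCondition_jumpPoints_inter_ball hu hΛ (hε i.1) _) fun q hq => ?_
  obtain ⟨um, up, l, hne, -, -, hl, hT⟩ := hJ q hq
  obtain ⟨k, hk⟩ := exists_nat_one_div_lt (norm_sub_pos_iff.2 hne)
  obtain ⟨j, hj⟩ := exists_nat_mem_jumpPoints (Λ := Λ) hk.le hl (by positivity : 0 < ε k) hT
  obtain ⟨m, hm⟩ := (TopologicalSpace.denseRange_denseSeq (ℝ × ℝ)).exists_dist_lt q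
    (by positivity : (0 : ℝ) < 1 / (j + 1) / 8)
  exact mem_iUnion.2 ⟨(k, j, m), hj, hm⟩

/-- A set of approximate jump points with uniformly bounded states and speeds can be
covered by countably many Lipschitz graphs. -/
theorem stmt17 (n : ℕ) (Λ M : ℝ) (hΛ : 0 < Λ) (hM : 0 < M)
    (u : ℝ × ℝ → EuclideanSpace ℝ (Fin n)) (hu : LocallyIntegrable u volume)
    (J : Set (ℝ × ℝ))
    (hJ : ∀ q ∈ J, ∃ (um up : EuclideanSpace ℝ (Fin n)) (l : ℝ),
      um ≠ up ∧ ‖um‖ ≤ M ∧ ‖up‖ ≤ M ∧ |l| ≤ Λ/2 ∧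
      Tendsto (fun r : ℝ => (r^2)⁻¹ *
          ∫ p in disk q r, ‖u p - (if p.2 - q.2 < l * (p.1 - q.1) then um else up)‖)
        (𝓝[>] 0) (𝓝 0)) :
    ∃ φ : ℕ → ℝ → ℝ, (∀ ℓ, LipschitzWith Λ.toNNReal (φ ℓ)) ∧
      J ⊆ ⋃ ℓ, {p : ℝ × ℝ | p.2 = φ ℓ p.1} :=
  stmt17_general n Λ M hΛ u hu J hJ
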